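/- Let n be an even positive integer. Then the limit A_n = lim_{k→∞} ∫₀^π |cosⁿ x − cosⁿ(kx)| dx (k ranging over the positive integers) exists and equals (16/π) · (n!/(n!!)²) · Σ_{j=0}^{(n−2)/2} ((2j)!!/(2j+1)!!) · (1/(2j+2)). -/

import Mathlib

open Real Filter Topology intervalIntegral Set
open scoped NNReal Nat

/-!
Cut `[0, π]` into `k` pieces of length `π / k`; on each piece `k x` sweeps one period of the
`π`-periodic function `t ↦ |cos s ^ n - cos t ^ n|`, while `cos x ^ n` moves by `O(1 / k)`. So the
integral is, up to `O(1 / k)`, a Riemann sum of the mean `π⁻¹ ∫∫_{[0, π]²} |cos s ^ n - cos t ^ n|`.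
By the symmetry `t ↦ π - t` and the monotonicity of `cos ^ n` on `[0, π / 2]`, this double integral
is `8 ∫_{[0, π / 2]} (π / 2 - 2 x) cos x ^ n`, and integrating by parts against
`(cos x ^ (n + 1) sin x)' = (n + 2) cos x ^ (n + 2) - (n + 1) cos x ^ n` gives a Wallis-type
recursion in `n` whose solution is the double-factorial sum.
-/

lemma abs_intervalIntegral_le_of_abs_le_mul_dist {f : ℝ → ℝ} {K : ℝ≥0} {a h : ℝ} (hh : 0 ≤ h)
    (hf : ∀ x, |f x| ≤ K * dist x a) : |∫ x in a..a + h, f x| ≤ K * h ^ 2 := by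
  have hbound : ∀ x ∈ uIoc a (a + h), ‖f x‖ ≤ K * h := by
    intro x hx
    rw [uIoc_of_le (by linarith), mem_Ioc] at hx
    calc ‖f x‖ ≤ K * dist x a := hf x
      _ ≤ K * h := by
        gcongr
        rw [Real.dist_eq, abs_of_nonneg (by linarith)]
        linarith
  calc |∫ x in a..a + h, f x| ≤ K * h * |a + h - a| := norm_integral_le_of_norm_le_const hbound
    _ = K * h ^ 2 := by rw [add_sub_cancel_left, abs_of_nonneg hh]; ring

section Averaging

variable {T : ℝ} {K : ℝ≥0} {G : ℝ → ℝ → ℝ}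

lemma lipschitzWith_intervalIntegral_right (hG : Continuous (Function.uncurry G)) (hT : 0 ≤ T)
    (hlip : ∀ t, LipschitzWith K (G · t)) :
    LipschitzWith (K * T.toNNReal) fun s => ∫ t in 0..T, G s t := by
  refine LipschitzWith.of_dist_le_mul fun s s' => ?_
  rw [dist_eq_norm, ← integral_sub ((hG.uncurry_left s).intervalIntegrable _ _)
    ((hG.uncurry_left s').intervalIntegrable _ _)]
  calc ‖∫ t in 0..T, (G s t - G s' t)‖ ≤ K * dist s s' * |T - 0| :=
        norm_integral_le_of_norm_le_const fun t _ => (hlip t).dist_le_mul s s'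
    _ = _ := by rw [sub_zero, abs_of_nonneg hT, NNReal.coe_mul, coe_toNNReal T hT]; ring

/-- On a step of length `T / k`, `x ↦ k * x` runs through one period, so freezing the first
argument of `G` at the left endpoint turns both sides into `k⁻¹ * ∫ t in 0..T, G a t`. -/
lemma abs_integral_comp_mul_sub_mean_le_step (hT : 0 < T) (hG : Continuous (Function.uncurry G))
    (hper : ∀ s, Function.Periodic (G s) T) (hlip : ∀ t, LipschitzWith K (G · t))
    {k : ℕ} (hk : k ≠ 0) (a : ℝ) :
    |(∫ x in a..a + T / k, G x (k * x)) - T⁻¹ * ∫ s in a..a + T / k, ∫ t in 0..T, G s t|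
      ≤ 2 * K * (T / k) ^ 2 := by
  set F := fun s => ∫ t in 0..T, G s t
  have hk' : (k : ℝ) ≠ 0 := Nat.cast_ne_zero.mpr hk
  have hGk : Continuous fun x => G x (k * x) :=
    hG.comp (continuous_id.prodMk (continuous_const.mul continuous_id))
  have hF := lipschitzWith_intervalIntegral_right hG hT.le hlip
  have hfrozen : ∫ x in a..a + T / k, G a (k * x) = (k : ℝ)⁻¹ * F a := by
    rw [integral_comp_mul_left (G a) hk', mul_add, mul_div_cancel₀ T hk',
      (hper a).intervalIntegral_add_eq _ 0, zero_add, smul_eq_mul]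
  have hfirst : |∫ x in a..a + T / k, (G x (k * x) - G a (k * x))| ≤ K * (T / k) ^ 2 :=
    abs_intervalIntegral_le_of_abs_le_mul_dist (by positivity)
      fun x => (hlip (k * x)).dist_le_mul x a
  have hsecond : |∫ s in a..a + T / k, (F s - F a)| ≤ ↑(K * T.toNNReal) * (T / k) ^ 2 :=
    abs_intervalIntegral_le_of_abs_le_mul_dist (by positivity) fun s => hF.dist_le_mul s a
  rw [NNReal.coe_mul, coe_toNNReal T hT.le] at hsecond
  have hGa : Continuous fun x => G a (k * x) :=
    (hG.uncurry_left a).comp (continuous_const.mul continuous_id)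
  rw [integral_sub (hGk.intervalIntegrable _ _) (hGa.intervalIntegrable _ _),
    hfrozen] at hfirst
  rw [integral_sub (hF.continuous.intervalIntegrable _ _) intervalIntegrable_const,
    integral_const, smul_eq_mul, add_sub_cancel_left] at hsecond
  have hsplit : (∫ x in a..a + T / k, G x (k * x)) - T⁻¹ * ∫ s in a..a + T / k, F s
      = ((∫ x in a..a + T / k, G x (k * x)) - (k : ℝ)⁻¹ * F a)
        - T⁻¹ * ((∫ s in a..a + T / k, F s) - T / k * F a) := by
    have hcancel : T⁻¹ * (T / k) = (k : ℝ)⁻¹ := by field_simp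
    linear_combination -F a * hcancel
  rw [hsplit]
  calc _ ≤ |(∫ x in a..a + T / k, G x (k * x)) - (k : ℝ)⁻¹ * F a|
        + T⁻¹ * |(∫ s in a..a + T / k, F s) - T / k * F a| := by
        refine (abs_sub _ _).trans_eq ?_
        rw [abs_mul, abs_of_pos (inv_pos.mpr hT)]
    _ ≤ K * (T / k) ^ 2 + T⁻¹ * (K * T * (T / k) ^ 2) := by gcongr
    _ = 2 * K * (T / k) ^ 2 := by field_simp; ring

lemma abs_integral_comp_mul_sub_mean_le (hT : 0 < T) (hG : Continuous (Function.uncurry G))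
    (hper : ∀ s, Function.Periodic (G s) T) (hlip : ∀ t, LipschitzWith K (G · t))
    {k : ℕ} (hk : k ≠ 0) :
    |(∫ x in 0..T, G x (k * x)) - T⁻¹ * ∫ s in 0..T, ∫ t in 0..T, G s t| ≤ 2 * K * T ^ 2 / k := by
  let step : ℕ → ℝ := fun j => j * (T / k)
  have hstep : ∀ j, step (j + 1) = step j + T / k := fun j => by simp only [step]; push_cast; ring
  have hcover : step 0 = 0 ∧ step k = T := ⟨by simp [step], by simp only [step]; field_simp⟩
  have hGk : Continuous fun x => G x (k * x) :=
    hG.comp (continuous_id.prodMk (continuous_const.mul continuous_id))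
  have hF := (lipschitzWith_intervalIntegral_right hG hT.le hlip).continuous
  have hsum : ∀ f : ℝ → ℝ, Continuous f →
      ∫ x in 0..T, f x = ∑ j ∈ Finset.range k, ∫ x in step j..step j + T / k, f x := fun f hf => by
    simp only [← hstep, sum_integral_adjacent_intervals fun j _ => hf.intervalIntegrable _ _,
      hcover]
  rw [hsum _ hGk, hsum _ hF, Finset.mul_sum, ← Finset.sum_sub_distrib]
  calc _ ≤ ∑ j ∈ Finset.range k, 2 * K * (T / k) ^ 2 := by
        refine (Finset.abs_sum_le_sum_abs _ _).trans (Finset.sum_le_sum fun j _ => ?_)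
        exact abs_integral_comp_mul_sub_mean_le_step hT hG hper hlip hk (step j)
    _ = 2 * K * T ^ 2 / k := by rw [Finset.sum_const, Finset.card_range, nsmul_eq_mul]; field_simp

theorem tendsto_integral_comp_mul_of_periodic (hT : 0 < T)
    (hG : Continuous (Function.uncurry G)) (hper : ∀ s, Function.Periodic (G s) T)
    (hlip : ∀ t, LipschitzWith K (G · t)) :
    Tendsto (fun k : ℕ => ∫ x in 0..T, G x (k * x)) atTop
      (𝓝 (T⁻¹ * ∫ s in 0..T, ∫ t in 0..T, G s t)) := by
  rw [tendsto_iff_norm_sub_tendsto_zero]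
  refine squeeze_zero_norm' ?_ (tendsto_const_div_atTop_nhds_zero_nat (2 * K * T ^ 2))
  filter_upwards [eventually_ne_atTop 0] with k hk
  rw [norm_norm]
  exact abs_integral_comp_mul_sub_mean_le hT hG hper hlip hk

end Averaging

lemma integral_eq_two_mul_integral_half_of_symm {f : ℝ → ℝ} {b : ℝ} (hf : Continuous f)
    (hsymm : ∀ x, f (b - x) = f x) :
    ∫ x in 0..b, f x = 2 * ∫ x in 0..b / 2, f x := by
  have hhalf : ∫ x in b / 2..b, f x = ∫ x in 0..b / 2, f x := by
    simpa [hsymm, sub_half] using (integral_comp_sub_left f b (a := 0) (b := b / 2)).symm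
  rw [← integral_add_adjacent_intervals (hf.intervalIntegrable 0 (b / 2))
    (hf.intervalIntegrable _ b), hhalf]
  ring

section Antitone

variable {f : ℝ → ℝ} {b : ℝ}

lemma integral_abs_sub_of_antitoneOn (hf : Continuous f) (hanti : AntitoneOn f (Icc 0 b))
    {s : ℝ} (hs : s ∈ Icc 0 b) :
    ∫ t in 0..b, |f s - f t| = 2 * (∫ t in 0..s, f t) - (∫ t in 0..b, f t) + (b - 2 * s) * f s := by
  have hleft : EqOn (fun t => |f s - f t|) (fun t => f t - f s) (uIcc 0 s) := by
    intro t ht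
    rw [uIcc_of_le hs.1] at ht
    show |f s - f t| = f t - f s
    rw [abs_sub_comm, abs_of_nonneg (sub_nonneg.mpr (hanti ⟨ht.1, ht.2.trans hs.2⟩ hs ht.2))]
  have hright : EqOn (fun t => |f s - f t|) (fun t => f s - f t) (uIcc s b) := by
    intro t ht
    rw [uIcc_of_le hs.2] at ht
    exact abs_of_nonneg (sub_nonneg.mpr (hanti hs ⟨hs.1.trans ht.1, ht.2⟩ ht.1))
  have htail : ∫ t in s..b, f t = (∫ t in 0..b, f t) - ∫ t in 0..s, f t :=
    (integral_interval_sub_left (hf.intervalIntegrable _ _) (hf.intervalIntegrable _ _)).symm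
  rw [← integral_add_adjacent_intervals (b := s), integral_congr hleft, integral_congr hright,
    integral_sub, integral_sub, htail, intervalIntegral.integral_const,
    intervalIntegral.integral_const, smul_eq_mul, smul_eq_mul]
  · ring
  all_goals exact Continuous.intervalIntegrable (by fun_prop) _ _

lemma integral_integral_abs_sub_of_antitoneOn (hf : Continuous f) (hanti : AntitoneOn f (Icc 0 b))
    (hb : 0 ≤ b) :
    ∫ s in 0..b, ∫ t in 0..b, |f s - f t| = 2 * ∫ s in 0..b, (b - 2 * s) * f s := by
  set g := fun s => ∫ t in 0..s, f t
  have hg : ∀ x, HasDerivAt g (f x) x := fun x => (hf.integral_hasStrictDerivAt 0 x).hasDerivAt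
  have hgc : Continuous g := continuous_iff_continuousAt.mpr fun x => (hg x).continuousAt
  have hparts : ∫ s in 0..b, g s = b * g b - ∫ s in 0..b, s * f s := by
    have := integral_mul_deriv_eq_deriv_mul (fun x _ => hg x) (fun x _ => hasDerivAt_id x)
      (hf.intervalIntegrable 0 b) intervalIntegrable_const
    simp only [mul_one, id_eq, mul_zero, sub_zero] at this
    simp only [this, mul_comm]
  have hweight : ∫ s in 0..b, (b - 2 * s) * f s = b * g b - 2 * ∫ s in 0..b, s * f s := by
    simp only [sub_mul, mul_assoc]
    rw [integral_sub, integral_const_mul, integral_const_mul]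
    all_goals exact Continuous.intervalIntegrable (by fun_prop) _ _
  rw [integral_congr fun s hs => integral_abs_sub_of_antitoneOn hf hanti
    (by rwa [uIcc_of_le hb] at hs)]
  rw [integral_add, integral_sub, integral_const_mul, hparts, intervalIntegral.integral_const,
    smul_eq_mul, hweight]
  · ring
  all_goals exact Continuous.intervalIntegrable (by fun_prop) _ _

end Antitone

lemma lipschitzWith_cos_pow (n : ℕ) : LipschitzWith n fun x => cos x ^ n := by
  refine LipschitzWith.of_dist_le_mul fun x y => ?_
  rw [Real.dist_eq, Real.dist_eq]
  calc |cos x ^ n - cos y ^ n| ≤ |cos x - cos y| * n * max |cos x| |cos y| ^ (n - 1) :=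
        abs_pow_sub_pow_le _ _ n
    _ ≤ |x - y| * n * 1 := by
        refine mul_le_mul (mul_le_mul_of_nonneg_right (abs_cos_sub_cos_le x y) n.cast_nonneg)
          (pow_le_one₀ (by positivity) (max_le (abs_cos_le_one x) (abs_cos_le_one y)))
          (by positivity) (by positivity)
    _ = n * |x - y| := by ring

lemma integral_pi_div_two_sub_two_mul_mul_cos_pow_add_two (n : ℕ) :
    (n + 2) * ∫ x in 0..π / 2, (π / 2 - 2 * x) * cos x ^ (n + 2)
      = (n + 1) * (∫ x in 0..π / 2, (π / 2 - 2 * x) * cos x ^ n) + 2 / (n + 2) := by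
  have hu : ∀ x, HasDerivAt (fun x => cos x ^ (n + 1) * sin x)
      ((n + 2) * cos x ^ (n + 2) - (n + 1) * cos x ^ n) x := by
    intro x
    refine (((hasDerivAt_cos x).fun_pow (n + 1)).mul (hasDerivAt_sin x)).congr_deriv ?_
    push_cast
    linear_combination -((n : ℝ) + 1) * cos x ^ n * sin_sq_add_cos_sq x
  have hv : ∀ x, HasDerivAt (fun x => π / 2 - 2 * x) (-2) x := fun x => by
    simpa using ((hasDerivAt_id x).const_mul 2).const_sub (π / 2)
  have hparts := integral_mul_deriv_eq_deriv_mul (a := 0) (b := π / 2) (fun x _ => hu x)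
    (fun x _ => hv x) (Continuous.intervalIntegrable (by fun_prop) _ _) intervalIntegrable_const
  have hsin : ∫ x in 0..π / 2, cos x ^ (n + 1) * sin x = 1 / (n + 2) := by
    have := integral_sin_pow_odd_mul_cos_pow (a := 0) (b := π / 2) 0 (n + 1)
    simp only [mul_zero, zero_add, pow_one, pow_zero, mul_one, cos_pi_div_two, cos_zero,
      integral_pow] at this
    simp_rw [mul_comm (cos _ ^ _)]
    rw [this]
    push_cast
    ring
  simp only [cos_pi_div_two, sin_zero, zero_pow n.succ_ne_zero, zero_mul, mul_zero,
    sub_zero] at hparts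
  have hweighted : ∀ (c : ℝ) (k : ℕ), ∫ x in 0..π / 2, c * cos x ^ k * (π / 2 - 2 * x)
      = c * ∫ x in 0..π / 2, (π / 2 - 2 * x) * cos x ^ k := fun c k => by
    rw [← integral_const_mul]
    congr 1 with x
    ring
  rw [integral_mul_const, hsin] at hparts
  simp only [sub_mul] at hparts
  rw [integral_sub (Continuous.intervalIntegrable (by fun_prop) _ _)
    (Continuous.intervalIntegrable (by fun_prop) _ _), hweighted, hweighted] at hparts
  linear_combination hparts

lemma integral_pi_div_two_sub_two_mul_mul_cos_pow_even (m : ℕ) :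
    ∫ x in 0..π / 2, (π / 2 - 2 * x) * cos x ^ (2 * m)
      = 2 * ((2 * m)! / ((2 * m)‼ : ℝ) ^ 2) * ∑ j ∈ Finset.range m,
          ((2 * j)‼ : ℝ) / ((2 * j + 1)‼ : ℝ) * (1 / (2 * (j : ℝ) + 2)) := by
  induction m with
  | zero =>
    simp only [mul_zero, pow_zero, mul_one, Finset.range_zero, Finset.sum_empty]
    rw [integral_sub intervalIntegrable_const (Continuous.intervalIntegrable (by fun_prop) _ _),
      integral_const_mul, integral_id, intervalIntegral.integral_const, smul_eq_mul]
    ring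
  | succ m ih =>
    have hrec := integral_pi_div_two_sub_two_mul_mul_cos_pow_add_two (2 * m)
    rw [show 2 * m + 2 = 2 * (m + 1) by ring, ih] at hrec
    have hdf : ((2 * m + 1)‼ : ℝ) * (2 * m)‼ = (2 * m + 1) * (2 * m)! := by
      exact_mod_cast (Nat.factorial_eq_mul_doubleFactorial (2 * m)).symm.trans
        (Nat.factorial_succ (2 * m))
    rw [Finset.sum_range_succ, show 2 * (m + 1) = 2 * m + 2 by ring, Nat.factorial_succ,
      Nat.factorial_succ, Nat.doubleFactorial_add_two]
    generalize ∫ x in 0..π / 2, (π / 2 - 2 * x) * cos x ^ (2 * (m + 1)) = D at hrec ⊢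
    generalize ∑ j ∈ Finset.range m, ((2 * j)‼ : ℝ) / ((2 * j + 1)‼ : ℝ) * (1 / (2 * (j : ℝ) + 2))
      = S at hrec ⊢
    push_cast at hrec ⊢
    field_simp at hrec ⊢
    linear_combination 2 * ((m : ℝ) + 1) * ((2 * m + 1)‼ : ℝ) * hrec
      + 2 * ((m : ℝ) + 1) * ((2 * m)‼ : ℝ) * hdf

lemma antitoneOn_cos_pow (n : ℕ) : AntitoneOn (fun x => cos x ^ n) (Icc 0 (π / 2)) :=
  fun x hx y hy hxy => pow_le_pow_left₀
    (cos_nonneg_of_mem_Icc ⟨by linarith [hy.1, pi_pos], hy.2⟩)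
    (antitoneOn_cos ⟨hx.1, by linarith [hx.2, pi_pos]⟩ ⟨hy.1, by linarith [hy.2, pi_pos]⟩ hxy) n

lemma integral_integral_abs_cos_pow_sub_cos_pow {n : ℕ} (hn : Even n) :
    ∫ s in 0..π, ∫ t in 0..π, |cos s ^ n - cos t ^ n|
      = 8 * ∫ s in 0..π / 2, (π / 2 - 2 * s) * cos s ^ n := by
  have hsymm : ∀ x, cos (π - x) ^ n = cos x ^ n := fun x => by rw [cos_pi_sub, hn.neg_pow]
  have hinner : ∀ s, ∫ t in 0..π, |cos s ^ n - cos t ^ n|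
      = 2 * ∫ t in 0..π / 2, |cos s ^ n - cos t ^ n| := fun s =>
    integral_eq_two_mul_integral_half_of_symm (by fun_prop) fun t => by rw [hsymm]
  rw [integral_eq_two_mul_integral_half_of_symm
    (continuous_parametric_intervalIntegral_of_continuous' (by fun_prop) 0 π)
    fun s => by simp only [hsymm], integral_congr fun s _ => hinner s, integral_const_mul,
    integral_integral_abs_sub_of_antitoneOn (by fun_prop) (antitoneOn_cos_pow n) (by positivity)]
  ring

theorem area_even_power_doubleFactorial (n : ℕ) (hn : Even n) (hpos : 0 < n) :
    Tendsto (fun k : ℕ => ∫ x in (0:ℝ)..π, |Real.cos x ^ n - Real.cos (k * x) ^ n|)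
      atTop
      (𝓝 (16 / π * ((n.factorial : ℝ) / (Nat.doubleFactorial n : ℝ) ^ 2) *
        ∑ j ∈ Finset.range ((n - 2) / 2 + 1),
          (Nat.doubleFactorial (2 * j) : ℝ) / (Nat.doubleFactorial (2 * j + 1) : ℝ) *
            (1 / (2 * (j : ℝ) + 2)))) := by
  have hlim := tendsto_integral_comp_mul_of_periodic (G := fun s t => |cos s ^ n - cos t ^ n|)
    pi_pos (by fun_prop) (fun s t => by simp only [cos_add_pi, hn.neg_pow])
    fun t => (LipschitzWith.dist_left (cos t ^ n)).comp (lipschitzWith_cos_pow n)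
  convert hlim using 2
  obtain ⟨m, rfl⟩ := hn.two_dvd
  rw [integral_integral_abs_cos_pow_sub_cos_pow hn,
    integral_pi_div_two_sub_two_mul_mul_cos_pow_even, show (2 * m - 2) / 2 + 1 = m by omega]
  ring
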